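/- Let m, n, s and p_1,…,p_s be positive integers, δ ≥ 0, w ∈ ℝ^m, and for each k ∈ {1,…,s} let L^{(k)}, U^{(k)} ∈ ℝ^{p_k} and q^{(k)} ∈ [0,1]^{m×p_k} with rows summing to 1. Consider the polytope P := {x ∈ ℝ^m : 0 ≤ x_i ≤ 1 for all i, ∑_{i=1}^m x_i = n, and for all k and ℓ ∈ {1,…,p_k}, L^{(k)}_ℓ − δn ≤ ∑_{i=1}^m q^{(k)}_{iℓ} x_i ≤ U^{(k)}_ℓ + δn}. If P is nonempty, then there exists x ∈ P such that ∑_i w_i x_i ≥ ∑_i w_i y_i for every y ∈ P, and x has at most min(m, 1 + ∑_{k=1}^s (p_k − 1)) fractional coordinates. -/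

import Mathlib

/-!
Take a maximizer `x` of `wᵀx` over `P` with as few fractional coordinates as possible. Membership
in `P` depends on `x` only through the box constraints and the values of `1 + ∑ₖ (pₖ - 1)` linear
functionals (the all-ones vector and, for each attribute, all but one column of `q⁽ᵏ⁾`; the
remaining column is determined by them because the rows of `q⁽ᵏ⁾` sum to 1). If `x` had more
fractional coordinates than that, some nonzero `d` supported on them would be annihilated by all
these functionals. Moving from `x` along `d` or `-d`, whichever does not decrease the objective,
until a coordinate reaches `0` or `1` stays in `P`, keeps `x` optimal and removes a fractional
coordinate, a contradiction.
-/

open Set Matrix Module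

noncomputable def exitTime (a c : ℝ) : ℝ := if c < 0 then a / -c else (1 - a) / c

section exitTime

variable {a c t : ℝ}

lemma exitTime_pos (ha : a ∈ Ioo 0 1) (hc : c ≠ 0) : 0 < exitTime a c := by
  unfold exitTime
  split_ifs with hneg
  · exact div_pos ha.1 (neg_pos.mpr hneg)
  · exact div_pos (sub_pos.mpr ha.2) (lt_of_le_of_ne (not_lt.mp hneg) hc.symm)

lemma add_mul_mem_Icc_of_le_exitTime (ha : a ∈ Icc 0 1) (hc : c ≠ 0) (ht0 : 0 ≤ t)
    (ht : t ≤ exitTime a c) : a + t * c ∈ Icc 0 1 := by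
  unfold exitTime at ht
  split_ifs at ht with hneg
  · rw [le_div_iff₀ (neg_pos.mpr hneg)] at ht
    constructor <;> nlinarith [ha.1, ha.2]
  · rw [le_div_iff₀ (lt_of_le_of_ne (not_lt.mp hneg) hc.symm)] at ht
    constructor <;> nlinarith [ha.1, ha.2]

lemma add_exitTime_mul_notMem_Ioo (hc : c ≠ 0) : a + exitTime a c * c ∉ Ioo 0 1 := by
  have : a + exitTime a c * c = 0 ∨ a + exitTime a c * c = 1 := by
    unfold exitTime
    split_ifs with hneg
    · left; field_simp; ring
    · right; field_simp; ring
  rcases this with h | h <;> simp [h]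

end exitTime

variable {ι : Type*} [Fintype ι]

def fractionalCoords (x : ι → ℝ) : Set ι := {i | x i ∈ Ioo 0 1}

lemma exists_pos_fractionalCoords_ssubset {x d : ι → ℝ} (hx : x ∈ Icc 0 1) (hd : d ≠ 0)
    (hsupp : ∀ i, d i ≠ 0 → i ∈ fractionalCoords x) :
    ∃ t : ℝ, 0 < t ∧ x + t • d ∈ Icc 0 1 ∧ fractionalCoords (x + t • d) ⊂ fractionalCoords x := by
  set S := Finset.univ.filter fun i => d i ≠ 0
  have hS : S.Nonempty := by
    obtain ⟨i, hi⟩ := Function.ne_iff.mp hd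
    exact ⟨i, by simpa [S] using hi⟩
  have hmemS {i} : i ∈ S ↔ d i ≠ 0 := by simp [S]
  set t := S.inf' hS fun i => exitTime (x i) (d i)
  have ht : 0 < t := (Finset.lt_inf'_iff hS).mpr fun i hi =>
    exitTime_pos (hsupp i (hmemS.mp hi)) (hmemS.mp hi)
  have hcoord (i) : (x + t • d) i = x i + t * d i := rfl
  have hcube : x + t • d ∈ Icc 0 1 := by
    rw [← pi_univ_Icc, mem_univ_pi] at hx ⊢
    intro i
    rw [hcoord]
    by_cases hdi : d i = 0
    · simpa [hdi] using hx i
    · exact add_mul_mem_Icc_of_le_exitTime (hx i) hdi ht.le (S.inf'_le _ (hmemS.mpr hdi))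
  refine ⟨t, ht, hcube, ?_, ?_⟩
  · intro i hi
    by_cases hdi : d i = 0
    · simpa [fractionalCoords, hcoord, hdi] using hi
    · exact hsupp i hdi
  · obtain ⟨i₀, hi₀, ht₀⟩ := S.exists_mem_eq_inf' hS fun i => exitTime (x i) (d i)
    have hdi₀ := hmemS.mp hi₀
    refine fun hsub => add_exitTime_mul_notMem_Ioo (a := x i₀) hdi₀ ?_
    rw [← ht₀, ← hcoord]
    exact hsub (hsupp i₀ hdi₀)

lemma exists_ne_zero_dotProduct_eq_zero_of_card_lt {κ : Type*} [Fintype κ] (a : κ → ι → ℝ)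
    {S : Set ι} (hS : Fintype.card κ < S.ncard) :
    ∃ d : ι → ℝ, d ≠ 0 ∧ (∀ j, a j ⬝ᵥ d = 0) ∧ ∀ i, d i ≠ 0 → i ∈ S := by
  classical
  let extend := Function.ExtendByZero.linearMap ℝ ((↑) : S → ι)
  have hker : LinearMap.ker ((Matrix.of a).mulVecLin ∘ₗ extend) ≠ ⊥ :=
    LinearMap.ker_ne_bot_of_finrank_lt <| by
      rwa [finrank_fintype_fun_eq_card, finrank_fintype_fun_eq_card,
        ← Nat.card_eq_fintype_card (α := S), Nat.card_coe_set_eq]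
  obtain ⟨c, hc, hc0⟩ := (Submodule.ne_bot_iff _).mp hker
  refine ⟨extend c, ?_, fun j => congrFun hc j, fun i hi => ?_⟩
  · intro h
    exact hc0 <| Function.extend_injective Subtype.val_injective (0 : ι → ℝ) <|
      h.trans (Function.extend_zero _).symm
  · by_contra hiS
    exact hi (Function.extend_apply' _ _ _ fun ⟨j, hj⟩ => hiS (hj ▸ j.2))

section descent

variable {κ : Type*} (a : κ → ι → ℝ) (w : ι → ℝ) {P : Set (ι → ℝ)}

lemma exists_isMaxOn_fractionalCoords_ssubset (hPcube : P ⊆ Icc 0 1)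
    (hmove : ∀ x ∈ P, ∀ d, (∀ j, a j ⬝ᵥ d = 0) → x + d ∈ Icc 0 1 → x + d ∈ P)
    {x d : ι → ℝ} (hxP : x ∈ P) (hx : IsMaxOn (w ⬝ᵥ ·) P x) (hd : d ≠ 0)
    (had : ∀ j, a j ⬝ᵥ d = 0) (hsupp : ∀ i, d i ≠ 0 → i ∈ fractionalCoords x) :
    ∃ x' ∈ P, IsMaxOn (w ⬝ᵥ ·) P x' ∧ fractionalCoords x' ⊂ fractionalCoords x := by
  wlog hwd : 0 ≤ w ⬝ᵥ d generalizing d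
  · exact this (neg_ne_zero.mpr hd) (by simpa using had) (by simpa using hsupp)
      (by rw [dotProduct_neg]; linarith)
  obtain ⟨t, ht, hcube, hsub⟩ := exists_pos_fractionalCoords_ssubset (hPcube hxP) hd hsupp
  have hx'P : x + t • d ∈ P :=
    hmove x hxP (t • d) (fun j => by rw [dotProduct_smul, had, smul_zero]) hcube
  refine ⟨_, hx'P, fun y hy => ?_, hsub⟩
  have hy : w ⬝ᵥ y ≤ w ⬝ᵥ x := hx hy
  show w ⬝ᵥ y ≤ w ⬝ᵥ (x + t • d)
  rw [dotProduct_add, dotProduct_smul, smul_eq_mul]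
  nlinarith

lemma exists_isMaxOn_ncard_fractionalCoords_le [Fintype κ] (hPc : IsClosed P)
    (hPne : P.Nonempty) (hPcube : P ⊆ Icc 0 1)
    (hmove : ∀ x ∈ P, ∀ d, (∀ j, a j ⬝ᵥ d = 0) → x + d ∈ Icc 0 1 → x + d ∈ P) :
    ∃ x ∈ P, IsMaxOn (w ⬝ᵥ ·) P x ∧ (fractionalCoords x).ncard ≤ Fintype.card κ := by
  obtain ⟨x₀, hx₀P, hx₀⟩ := (isCompact_Icc.of_isClosed_subset hPc hPcube).exists_isMaxOn hPne
    (continuous_const.dotProduct continuous_id).continuousOn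
  obtain ⟨x, ⟨hxP, hx⟩, hmin⟩ := (measure fun x => (fractionalCoords x).ncard).wf.has_min
    {x | x ∈ P ∧ IsMaxOn (w ⬝ᵥ ·) P x} ⟨x₀, hx₀P, hx₀⟩
  refine ⟨x, hxP, hx, not_lt.mp fun hcard => ?_⟩
  obtain ⟨d, hd, had, hsupp⟩ := exists_ne_zero_dotProduct_eq_zero_of_card_lt a hcard
  obtain ⟨x', hx'P, hx', hssub⟩ :=
    exists_isMaxOn_fractionalCoords_ssubset a w hPcube hmove hxP hx hd had hsupp
  exact hmin x' ⟨hx'P, hx'⟩ (ncard_lt_ncard hssub)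

end descent

section denoised

variable {s : ℕ} {p : Fin s → ℕ}

lemma sum_mul_eq_zero_of_forall_ne {κ : Type*} [Fintype κ] (q : ι → κ → ℝ)
    (hq : ∀ i, ∑ ℓ, q i ℓ = 1) {d : ι → ℝ} (hd : ∑ i, d i = 0) {ℓ₀ : κ}
    (h : ∀ ℓ ≠ ℓ₀, ∑ i, q i ℓ * d i = 0) (ℓ : κ) : ∑ i, q i ℓ * d i = 0 := by
  have htotal : ∑ ℓ, ∑ i, q i ℓ * d i = 0 := by
    rw [Finset.sum_comm]
    simp_rw [← Finset.sum_mul, hq, one_mul]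
    exact hd
  rw [Finset.sum_eq_single ℓ₀ (fun ℓ _ hℓ => h ℓ hℓ) (by simp)] at htotal
  by_cases hℓ : ℓ = ℓ₀
  · rwa [hℓ]
  · exact h ℓ hℓ

def denoisedPolytope (n : ℕ) (δ : ℝ) (L U : ∀ k : Fin s, Fin (p k) → ℝ)
    (q : ∀ k : Fin s, ι → Fin (p k) → ℝ) : Set (ι → ℝ) :=
  {x | (∀ i, 0 ≤ x i ∧ x i ≤ 1) ∧ (∑ i, x i = (n : ℝ)) ∧
    ∀ (k : Fin s) (ℓ : Fin (p k)),
      L k ℓ - δ * n ≤ ∑ i, q k i ℓ * x i ∧ ∑ i, q k i ℓ * x i ≤ U k ℓ + δ * n}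

/-- Column `ℓ₀ k` of `q k` is left out: for a direction `d` with `∑ i, d i = 0`, it is
determined by the others, see `sum_mul_eq_zero_of_forall_ne`. -/
def denoisedConstraintRows (q : ∀ k : Fin s, ι → Fin (p k) → ℝ) (ℓ₀ : ∀ k, Fin (p k)) :
    Option (Σ k, {ℓ // ℓ ≠ ℓ₀ k}) → ι → ℝ
  | none => 1
  | some ⟨k, ℓ⟩ => fun i => q k i ℓ

lemma card_denoisedConstraintRows_index (ℓ₀ : ∀ k, Fin (p k)) :
    Fintype.card (Option (Σ k, {ℓ // ℓ ≠ ℓ₀ k})) = 1 + ∑ k, (p k - 1) := by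
  simp [Fintype.card_option, Fintype.card_sigma, Fintype.card_subtype_compl, add_comm]

variable {n : ℕ} {δ : ℝ} {L U : ∀ k : Fin s, Fin (p k) → ℝ} {q : ∀ k : Fin s, ι → Fin (p k) → ℝ}

lemma denoisedPolytope_subset_Icc : denoisedPolytope n δ L U q ⊆ Icc 0 1 :=
  fun _ hx => ⟨fun i => (hx.1 i).1, fun i => (hx.1 i).2⟩

lemma isClosed_denoisedPolytope : IsClosed (denoisedPolytope n δ L U q) := by
  simp only [denoisedPolytope, ofPred_and, ofPred_forall]
  exact (isClosed_iInter fun i => (isClosed_le continuous_const (continuous_apply i)).inter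
      (isClosed_le (continuous_apply i) continuous_const)).inter
    ((isClosed_eq (by fun_prop) continuous_const).inter
      (isClosed_iInter fun k => isClosed_iInter fun ℓ =>
        (isClosed_le (by fun_prop) (by fun_prop)).inter (isClosed_le (by fun_prop) (by fun_prop))))

lemma add_mem_denoisedPolytope (hqsum : ∀ k i, ∑ ℓ, q k i ℓ = 1) (ℓ₀ : ∀ k, Fin (p k))
    {x d : ι → ℝ} (hx : x ∈ denoisedPolytope n δ L U q)
    (hd : ∀ j, denoisedConstraintRows q ℓ₀ j ⬝ᵥ d = 0) (hxd : x + d ∈ Icc 0 1) :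
    x + d ∈ denoisedPolytope n δ L U q := by
  obtain ⟨-, hsum, hattr⟩ := hx
  have hdsum : ∑ i, d i = 0 := by simpa [denoisedConstraintRows, one_dotProduct] using hd none
  have hdq (k : Fin s) (ℓ : Fin (p k)) : ∑ i, q k i ℓ * d i = 0 :=
    sum_mul_eq_zero_of_forall_ne (q k) (hqsum k) hdsum (fun ℓ hℓ => hd (some ⟨k, ℓ, hℓ⟩)) ℓ
  refine ⟨fun i => ⟨hxd.1 i, hxd.2 i⟩, ?_, fun k ℓ => ?_⟩
  · simp [Finset.sum_add_distrib, hsum, hdsum]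
  · simp only [Pi.add_apply, mul_add, Finset.sum_add_distrib, hdq, add_zero]
    exact hattr k ℓ

end denoised

theorem stmt9_general (m n s : ℕ)
    (p : Fin s → ℕ) (hp : ∀ k, 0 < p k)
    (δ : ℝ) (w : Fin m → ℝ)
    (L U : ∀ k : Fin s, Fin (p k) → ℝ)
    (q : ∀ k : Fin s, Fin m → Fin (p k) → ℝ)
    (hqsum : ∀ k i, ∑ ℓ, q k i ℓ = 1)
    (P : Set (Fin m → ℝ))
    (hP : P = {x | (∀ i, 0 ≤ x i ∧ x i ≤ 1) ∧ (∑ i, x i = (n : ℝ)) ∧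
      ∀ (k : Fin s) (ℓ : Fin (p k)),
        L k ℓ - δ * n ≤ ∑ i, q k i ℓ * x i ∧ ∑ i, q k i ℓ * x i ≤ U k ℓ + δ * n})
    (hPne : P.Nonempty) :
    ∃ x ∈ P, (∀ y ∈ P, ∑ i, w i * y i ≤ ∑ i, w i * x i) ∧
      {i | 0 < x i ∧ x i < 1}.ncard ≤ min m (1 + ∑ k, (p k - 1)) := by
  subst hP
  let ℓ₀ (k : Fin s) : Fin (p k) := ⟨0, hp k⟩
  obtain ⟨x, hxP, hx, hcard⟩ := exists_isMaxOn_ncard_fractionalCoords_le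
    (denoisedConstraintRows q ℓ₀) w isClosed_denoisedPolytope hPne denoisedPolytope_subset_Icc
    fun _ hx _ hd hxd => add_mem_denoisedPolytope hqsum ℓ₀ hx hd hxd
  refine ⟨x, hxP, fun y hy => hx hy, le_min ?_ ?_⟩
  · exact (ncard_le_card _).trans_eq (Nat.card_fin m)
  · rwa [card_denoisedConstraintRows_index] at hcard

/-- **Existence of a basic feasible optimal solution (multiple protected attributes).**
If the denoised LP polytope is nonempty, there is a maximizer of the linear objective
`wᵀx` over it with at most `min m (1 + ∑ k (p k − 1))` fractional coordinates. -/
theorem stmt9 (m n s : ℕ) (hm : 0 < m) (hn : 0 < n) (hs : 0 < s)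
    (p : Fin s → ℕ) (hp : ∀ k, 0 < p k)
    (δ : ℝ) (hδ : 0 ≤ δ) (w : Fin m → ℝ)
    (L U : ∀ k : Fin s, Fin (p k) → ℝ)
    (q : ∀ k : Fin s, Fin m → Fin (p k) → ℝ)
    (hq : ∀ k i ℓ, q k i ℓ ∈ Set.Icc (0 : ℝ) 1)
    (hqsum : ∀ k i, ∑ ℓ, q k i ℓ = 1)
    (P : Set (Fin m → ℝ))
    (hP : P = {x | (∀ i, 0 ≤ x i ∧ x i ≤ 1) ∧ (∑ i, x i = (n : ℝ)) ∧
      ∀ (k : Fin s) (ℓ : Fin (p k)),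
        L k ℓ - δ * n ≤ ∑ i, q k i ℓ * x i ∧ ∑ i, q k i ℓ * x i ≤ U k ℓ + δ * n})
    (hPne : P.Nonempty) :
    ∃ x ∈ P, (∀ y ∈ P, ∑ i, w i * y i ≤ ∑ i, w i * x i) ∧
      {i | 0 < x i ∧ x i < 1}.ncard ≤ min m (1 + ∑ k, (p k - 1)) :=
  stmt9_general m n s p hp δ w L U q hqsum P hP hPne
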